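/- arXiv:0907.5058 — 2 statements merged into one kernel-verified Lean document; each statement's English description precedes it below -/
import Mathlib

section
/- Let A and B be two DFAs over the same alphabet Σ with disjoint state sets, initial states p₀ and q₀, let R = {(p,q) ∈ Q₁ × Q₂ | ∃ x ∈ Σ*, δ₁(p₀,x) = p ∧ δ₂(q₀,x) = q}, and let R* be the smallest equivalence relation on Q₁ ⊔ Q₂ containing R. Then A and B accept the same language if and only if for every pair (p,q) ∈ R*, ε(p) = ε(q). -/
/-- The relation `R` of pairs of states of the two DFAs reachable by a common word,
viewed as a relation on the disjoint union of the state sets. -/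
def sumReachPairs {α σ₁ σ₂ : Type} (A : DFA α σ₁) (B : DFA α σ₂) :
    (σ₁ ⊕ σ₂) → (σ₁ ⊕ σ₂) → Prop :=
  fun r s => ∃ p q, r = Sum.inl p ∧ s = Sum.inr q ∧
    ∃ x : List α, A.evalFrom A.start x = p ∧ B.evalFrom B.start x = q

/-- Finality (`ε`) on the disjoint union of the state sets. -/
def sumEps {α σ₁ σ₂ : Type} (A : DFA α σ₁) (B : DFA α σ₂) : (σ₁ ⊕ σ₂) → Prop :=
  Sum.elim (· ∈ A.accept) (· ∈ B.accept)

theorem Relation.forall_eqvGen_iff_iff {β : Type*} {r : β → β → Prop} {P : β → Prop} :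
    (∀ a b, EqvGen r a b → (P a ↔ P b)) ↔ ∀ a b, r a b → (P a ↔ P b) := by
  have hP : Equivalence (InvImage (· ↔ ·) P) :=
    InvImage.equivalence _ P ⟨Iff.refl, Iff.symm, Iff.trans⟩
  refine ⟨fun h a b hab => h a b (.rel a b hab), fun h a b hab => ?_⟩
  exact hP.eqvGen_iff.mp (EqvGen.mono h a b hab)

theorem DFA.accepts_eq_iff_forall_sumReachPairs {α σ₁ σ₂ : Type} (A : DFA α σ₁) (B : DFA α σ₂) :
    A.accepts = B.accepts ↔
      ∀ r s, sumReachPairs A B r s → (sumEps A B r ↔ sumEps A B s) := by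
  simp only [Language.ext_iff, DFA.mem_accepts, DFA.eval]
  constructor
  · rintro h _ _ ⟨p, q, rfl, rfl, x, rfl, rfl⟩
    exact h x
  · intro h x
    exact h _ _ ⟨_, _, rfl, rfl, x, rfl, rfl⟩

theorem dfa_equiv_iff_eqvGen_agree_general
    {α σ₁ σ₂ : Type}
    (A : DFA α σ₁) (B : DFA α σ₂) :
    A.accepts = B.accepts ↔
      (∀ r s, Relation.EqvGen (sumReachPairs A B) r s →
        (sumEps A B r ↔ sumEps A B s)) :=
  (A.accepts_eq_iff_forall_sumReachPairs B).trans Relation.forall_eqvGen_iff_iff.symm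

/-- the DFAs accept the same language iff all pairs in the equivalence
closure `R*` of `R` agree on finality. -/
theorem dfa_equiv_iff_eqvGen_agree
    {α σ₁ σ₂ : Type} [Fintype σ₁] [Fintype σ₂]
    (A : DFA α σ₁) (B : DFA α σ₂) :
    A.accepts = B.accepts ↔
      (∀ r s, Relation.EqvGen (sumReachPairs A B) r s →
        (sumEps A B r ↔ sumEps A B s)) :=
  dfa_equiv_iff_eqvGen_agree_general A B
end

section
/- Let A and B be two DFAs over the same alphabet Σ with disjoint state sets, initial states p₀ and q₀, let R = {(p,q) ∈ Q₁ × Q₂ | ∃ x ∈ Σ*, δ₁(p₀,x) = p ∧ δ₂(q₀,x) = q}, and let R* be the smallest equivalence relation on Q₁ ⊔ Q₂ containing R. If A and B accept the same language, then R* is a right-invariant equivalence relation: every R*-equivalence class is homogeneous (all its states r have the same value ε(r)), and for all states r, s ∈ Q₁ ⊔ Q₂ and every a ∈ Σ, if r R* s then δ(r,a) R* δ(s,a), where δ acts as δ₁ on Q₁ and δ₂ on Q₂. -/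
/-- The merged transition function on the disjoint union of the state sets. -/
def sumStep {α σ₁ σ₂ : Type} (A : DFA α σ₁) (B : DFA α σ₂) :
    (σ₁ ⊕ σ₂) → α → (σ₁ ⊕ σ₂) :=
  fun r a => Sum.elim (fun p => Sum.inl (A.step p a)) (fun q => Sum.inr (B.step q a)) r

/-- if the two DFAs accept the same language, then the equivalence
closure `R*` of `R` is a right-invariant equivalence relation: its classes are
homogeneous and it is compatible with the merged transition function. -/
theorem eqvGen_right_invariant_of_equiv
    {α σ₁ σ₂ : Type} [Fintype σ₁] [Fintype σ₂]
    (A : DFA α σ₁) (B : DFA α σ₂)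
    (h : A.accepts = B.accepts) :
    (∀ r s, Relation.EqvGen (sumReachPairs A B) r s →
        (sumEps A B r ↔ sumEps A B s)) ∧
    (∀ r s, ∀ a : α, Relation.EqvGen (sumReachPairs A B) r s →
        Relation.EqvGen (sumReachPairs A B) (sumStep A B r a) (sumStep A B s a)) := by
  constructor
  · intro r s hrs
    induction hrs with
    | rel r s hrel =>
      obtain ⟨p, q, rfl, rfl, x, hp, hq⟩ := hrel
      have : x ∈ A.accepts ↔ x ∈ B.accepts := by rw [h]
      simp only [DFA.mem_accepts, DFA.eval, hp, hq] at this
      simpa [sumEps] using this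
    | refl r => rfl
    | symm _ _ _ ih => exact ih.symm
    | trans _ _ _ _ _ ih1 ih2 => exact ih1.trans ih2
  · intro r s a hrs
    induction hrs with
    | rel r s hrel =>
      obtain ⟨p, q, rfl, rfl, x, hp, hq⟩ := hrel
      exact Relation.EqvGen.rel _ _ ⟨_, _, rfl, rfl, x ++ [a], by
        simp only [DFA.evalFrom, List.foldl_append, List.foldl_cons, List.foldl_nil] at *
        exact ⟨by rw [hp], by rw [hq]⟩⟩
    | refl r => exact Relation.EqvGen.refl _
    | symm _ _ _ ih => exact Relation.EqvGen.symm _ _ ih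
    | trans _ y _ _ _ ih1 ih2 => exact Relation.EqvGen.trans _ (sumStep A B y a) _ ih1 ih2
end
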